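/- arXiv:1609.07324 — 4 statements merged into one kernel-verified Lean document; each statement's English description precedes it below -/
import Mathlib

section
/- Let (x,v) : [0,∞) → (ℝ^d)^N × (ℝ^d)^N be a solution of the Cucker-Smale system ẋ_i = v_i, v̇_i = (1/N) Σ_{j=1}^N a(‖x_i − x_j‖)(v_j − v_i), where the interaction kernel a : [0,∞) → (0,∞) is nonincreasing (decreasing) and strictly positive. Suppose there exists R > 0 such that the set {t ≥ 0 : ‖x_i(t) − x_j(t)‖ ≤ R for all i,j = 1,...,N} has infinite Lebesgue measure. Then (x,v) converges to consensus, i.e. lim_{t→∞} ‖v_i(t) − v̄(t)‖ = 0 for every i = 1,...,N, where v̄(t) = (1/N) Σ_{i=1}^N v_i(t). -/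
/-!
The Lyapunov function `spread v = ∑ᵢ ∑ⱼ ‖vᵢ - vⱼ‖²` has derivative
`-2 ∑ᵢ ∑ⱼ a(‖xᵢ - xⱼ‖) ‖vᵢ - vⱼ‖² ≤ 0`, because the interaction weights are symmetric. While all
mutual distances are at most `R`, every weight is at least `a R`, so `spread v` decays at rate at
least `2 a(R) · spread v`. As long as `spread v ≥ ε` it therefore loses at least `2 a(R) ε` per
unit of time spent in the bounded configurations; these times having infinite measure, the
nonnegative, nonincreasing `spread v` drops below every `ε`. Finally `‖vᵢ - v̄‖ ≤ √(spread v)`.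
-/

open scoped BigOperators RealInnerProductSpace Topology
open MeasureTheory Filter Finset Set

theorem add_mul_volume_real_le_of_hasDerivAt {F G : ℝ → ℝ} {S : Set ℝ} {k s t : ℝ}
    (hst : s ≤ t) (hS : MeasurableSet S) (hF : ∀ u ∈ Icc s t, HasDerivAt F (G u) u)
    (hG : ∀ u ∈ Ioo s t, G u ≤ 0) (hGS : ∀ u ∈ S ∩ Ioo s t, G u ≤ -k) :
    F t + k * volume.real (S ∩ Ioc s t) ≤ F s := by
  have hGφ : ∀ u ∈ Ioo s t, G u ≤ S.indicator (fun _ => -k) u := by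
    intro u hu
    by_cases huS : u ∈ S
    · simpa [huS] using hGS u ⟨huS, hu⟩
    · simpa [huS] using hG u hu
  have hFTC : F t - F s ≤ ∫ u in s..t, S.indicator (fun _ => -k) u :=
    intervalIntegral.sub_le_integral_of_hasDeriv_right_of_le hst
      (fun u hu => (hF u hu).continuousAt.continuousWithinAt)
      (fun u hu => (hF u (Ioo_subset_Icc_self hu)).hasDerivWithinAt)
      ((integrableOn_const measure_Icc_lt_top.ne).indicator hS) hGφ
  rw [intervalIntegral.integral_of_le hst, integral_indicator_const _ hS,
    measureReal_restrict_apply hS, smul_eq_mul] at hFTC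
  linarith

theorem exists_lt_volume_real_inter_Ioc {S : Set ℝ} (hS0 : S ⊆ Ici 0) (hS : volume S = ⊤)
    (K : ℝ) : ∃ t, 0 ≤ t ∧ K < volume.real (S ∩ Ioc 0 t) := by
  have hUnion : volume (⋃ t : ℝ, S ∩ Ioc 0 t) = ⊤ := by
    rw [← inter_iUnion, iUnion_Ioc_right, measure_congr ((ae_eq_refl S).inter Ioi_ae_eq_Ici),
      inter_eq_left.mpr hS0, hS]
  have hmono : Monotone fun t : ℝ => S ∩ Ioc 0 t :=
    fun _ _ h => inter_subset_inter_right _ (Ioc_subset_Ioc_right h)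
  have hgrow := tendsto_measure_iUnion_atTop (μ := volume) hmono
  rw [hUnion] at hgrow
  obtain ⟨t, hlt, ht⟩ := ((tendsto_order.1 hgrow).1 _ (ENNReal.ofReal_lt_top (r := max K 0))).and
    (eventually_ge_atTop 0) |>.exists
  have hfin : volume (S ∩ Ioc 0 t) ≠ ⊤ :=
    (measure_mono inter_subset_right).trans_lt measure_Ioc_lt_top |>.ne
  refine ⟨t, ht, (le_max_left K 0).trans_lt ?_⟩
  exact (ENNReal.ofReal_lt_iff_lt_toReal (le_max_right K 0) hfin).1 hlt

theorem tendsto_zero_of_hasDerivAt_le_neg_mul {F G : ℝ → ℝ} {S : Set ℝ} {c : ℝ} (hc : 0 < c)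
    (hS : MeasurableSet S) (hS0 : S ⊆ Ici 0) (hSvol : volume S = ⊤)
    (hF0 : ∀ t, 0 ≤ t → 0 ≤ F t) (hF : ∀ t, 0 ≤ t → HasDerivAt F (G t) t)
    (hG : ∀ t, 0 ≤ t → G t ≤ 0) (hGS : ∀ t ∈ S, G t ≤ -(c * F t)) :
    Tendsto F atTop (𝓝 0) := by
  have hdecay : ∀ {k s t : ℝ}, 0 ≤ s → s ≤ t → (∀ u ∈ S ∩ Ioo s t, G u ≤ -k) →
      F t + k * volume.real (S ∩ Ioc s t) ≤ F s := fun hs hst hGk =>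
    add_mul_volume_real_le_of_hasDerivAt hst hS (fun u hu => hF u (hs.trans hu.1))
      (fun u hu => hG u (hs.trans hu.1.le)) hGk
  have hanti : ∀ s t, 0 ≤ s → s ≤ t → F t ≤ F s := fun s t hs hst => by
    simpa using hdecay (k := 0) hs hst fun u hu => by simpa using hG u (hs.trans hu.2.1.le)
  have hsmall : ∀ ε > 0, ∃ T, 0 ≤ T ∧ F T < ε := by
    intro ε hε
    by_contra! hlarge
    obtain ⟨t, ht, hK⟩ := exists_lt_volume_real_inter_Ioc hS0 hSvol (F 0 / (c * ε))
    have hloss := hdecay (k := c * ε) le_rfl ht fun u hu =>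
      (hGS u hu.1).trans (neg_le_neg (mul_le_mul_of_nonneg_left (hlarge u (hS0 hu.1)) hc.le))
    rw [div_lt_iff₀' (by positivity)] at hK
    linarith [hF0 t ht]
  refine Metric.tendsto_atTop.2 fun ε hε => ?_
  obtain ⟨T, hT, hFT⟩ := hsmall ε hε
  refine ⟨T, fun t ht => ?_⟩
  rw [Real.dist_eq, sub_zero, abs_of_nonneg (hF0 t (hT.trans ht))]
  exact (hanti T t hT ht).trans_lt hFT

theorem isClosed_setOf_forall_norm_sub_le {ι E : Type*} [SeminormedAddCommGroup E] {s : Set ℝ}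
    (hs : IsClosed s) {x : ℝ → ι → E} (hx : ∀ i, ContinuousOn (fun t => x t i) s) (R : ℝ) :
    IsClosed {t | t ∈ s ∧ ∀ i j, ‖x t i - x t j‖ ≤ R} := by
  have hdist : ContinuousOn (fun t i j => ‖x t i - x t j‖) s :=
    continuousOn_pi.2 fun i => continuousOn_pi.2 fun j => ((hx i).sub (hx j)).norm
  have hball : IsClosed {M : ι → ι → ℝ | ∀ i j, M i j ≤ R} := by
    simp only [ofPred_forall]
    exact isClosed_iInter fun i => isClosed_iInter fun j => isClosed_le (by fun_prop) continuous_const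
  exact hdist.preimage_isClosed_of_isClosed hs hball

namespace CuckerSmale

variable {ι E : Type*} [Fintype ι]

/-- With `A i j = a ‖xᵢ - xⱼ‖`, the Cucker–Smale system reads `v̇ᵢ = N⁻¹ • alignment A v i`. -/
def alignment [AddCommGroup E] [Module ℝ E] (A : ι → ι → ℝ) (w : ι → E) (i : ι) : E :=
  ∑ k, A i k • (w k - w i)

def spread [SeminormedAddCommGroup E] (w : ι → E) : ℝ := ∑ i, ∑ j, ‖w i - w j‖ ^ 2

def dissipation [SeminormedAddCommGroup E] (A : ι → ι → ℝ) (w : ι → E) : ℝ :=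
  ∑ i, ∑ j, A i j * ‖w i - w j‖ ^ 2

variable {A : ι → ι → ℝ}

theorem sum_sum_mul_swap (hA : ∀ i j, A i j = A j i) (f : ι → ι → ℝ) :
    ∑ i, ∑ j, A i j * f j i = ∑ i, ∑ j, A i j * f i j := by
  rw [sum_comm]
  simp only [hA]

section Bounds

variable [SeminormedAddCommGroup E]

theorem spread_nonneg (w : ι → E) : 0 ≤ spread w := by
  unfold spread
  positivity

theorem dissipation_nonneg (hA : ∀ i j, 0 ≤ A i j) (w : ι → E) : 0 ≤ dissipation A w :=
  sum_nonneg fun i _ => sum_nonneg fun j _ => mul_nonneg (hA i j) (sq_nonneg _)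

theorem mul_spread_le_dissipation {κ : ℝ} (hA : ∀ i j, κ ≤ A i j) (w : ι → E) :
    κ * spread w ≤ dissipation A w := by
  simp only [spread, dissipation, mul_sum]
  gcongr with i _ j _
  exact hA i j

theorem norm_sub_le_sqrt_spread (w : ι → E) (i j : ι) : ‖w i - w j‖ ≤ √(spread w) := by
  refine Real.le_sqrt_of_sq_le ?_
  calc ‖w i - w j‖ ^ 2 ≤ ∑ j', ‖w i - w j'‖ ^ 2 :=
        single_le_sum (f := fun j' => ‖w i - w j'‖ ^ 2) (fun _ _ => sq_nonneg _) (mem_univ j)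
    _ ≤ spread w :=
        single_le_sum (f := fun i' => ∑ j', ‖w i' - w j'‖ ^ 2)
          (fun _ _ => sum_nonneg fun _ _ => sq_nonneg _) (mem_univ i)

theorem norm_sub_mean_le_sqrt_spread [NormedSpace ℝ E] (w : ι → E) (i : ι) :
    ‖w i - (Fintype.card ι : ℝ)⁻¹ • ∑ j, w j‖ ≤ √(spread w) := by
  have hN : (0 : ℝ) < Fintype.card ι := Nat.cast_pos.2 (Fintype.card_pos_iff.2 ⟨i⟩)
  have hmean : w i - (Fintype.card ι : ℝ)⁻¹ • ∑ j, w j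
      = (Fintype.card ι : ℝ)⁻¹ • ∑ j, (w i - w j) := by
    rw [sum_sub_distrib, sum_const, card_univ, smul_sub, ← Nat.cast_smul_eq_nsmul ℝ, smul_smul,
      inv_mul_cancel₀ hN.ne', one_smul]
  calc ‖w i - (Fintype.card ι : ℝ)⁻¹ • ∑ j, w j‖
      ≤ (Fintype.card ι : ℝ)⁻¹ * ∑ j, ‖w i - w j‖ := by
        rw [hmean, norm_smul, Real.norm_of_nonneg (inv_nonneg.2 hN.le)]
        gcongr
        exact norm_sum_le _ _
    _ ≤ (Fintype.card ι : ℝ)⁻¹ * ∑ _j : ι, √(spread w) := by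
        gcongr with j
        exact norm_sub_le_sqrt_spread w i j
    _ = √(spread w) := by
        rw [sum_const, card_univ, nsmul_eq_mul, inv_mul_cancel_left₀ hN.ne']

end Bounds

section Inner

variable [NormedAddCommGroup E] [InnerProductSpace ℝ E]

theorem sum_alignment_eq_zero (hA : ∀ i j, A i j = A j i) (w : ι → E) :
    ∑ i, alignment A w i = 0 := by
  simp only [alignment, smul_sub, sum_sub_distrib, sub_eq_zero]
  rw [sum_comm]
  simp only [hA]

theorem two_mul_sum_inner_alignment (hA : ∀ i j, A i j = A j i) (w : ι → E) :
    2 * ∑ i, ⟪w i, alignment A w i⟫ = -dissipation A w := by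
  set f : ι → ι → ℝ := fun i j => ⟪w i, w j - w i⟫
  have hsplit : ∀ i j, ‖w i - w j‖ ^ 2 = -(f i j + f j i) := by
    intro i j
    simp only [f]
    rw [← neg_sub (w i) (w j), inner_neg_right, ← sub_eq_neg_add, ← inner_sub_left,
      ← inner_neg_left, neg_sub, real_inner_self_eq_norm_sq]
  simp only [dissipation, hsplit, alignment, inner_sum, real_inner_smul_right, mul_neg, mul_add,
    sum_neg_distrib, sum_add_distrib, sum_sum_mul_swap hA f]
  ring

theorem sum_sum_inner_sub_alignment (hA : ∀ i j, A i j = A j i) (w : ι → E) :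
    ∑ i, ∑ j, ⟪w i - w j, alignment A w i - alignment A w j⟫
      = -(Fintype.card ι * dissipation A w) := by
  have hzero := sum_alignment_eq_zero hA w
  have hdiag := two_mul_sum_inner_alignment hA w
  simp only [inner_sub_left, inner_sub_right, sum_sub_distrib, ← inner_sum, ← sum_inner, hzero,
    inner_zero_right, sum_const, card_univ, ← Nat.cast_smul_eq_nsmul ℝ,
    real_inner_smul_right, smul_eq_mul, ← mul_sum]
  linear_combination (Fintype.card ι : ℝ) * hdiag

theorem hasDerivAt_spread {w : ℝ → ι → E} {w' : ι → E} {t : ℝ}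
    (hw : ∀ i, HasDerivAt (fun s => w s i) (w' i) t) :
    HasDerivAt (fun s => spread (w s)) (2 * ∑ i, ∑ j, ⟪w t i - w t j, w' i - w' j⟫) t := by
  simpa only [spread, mul_sum] using
    HasDerivAt.fun_sum fun i _ => HasDerivAt.fun_sum fun j _ => ((hw i).fun_sub (hw j)).norm_sq

theorem hasDerivAt_spread_of_alignment [Nonempty ι] (hA : ∀ i j, A i j = A j i)
    {w : ℝ → ι → E} {t : ℝ}
    (hw : ∀ i, HasDerivAt (fun s => w s i) ((Fintype.card ι : ℝ)⁻¹ • alignment A (w t) i) t) :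
    HasDerivAt (fun s => spread (w s)) (-2 * dissipation A (w t)) t := by
  convert hasDerivAt_spread hw using 1
  have hN : (Fintype.card ι : ℝ) ≠ 0 := Nat.cast_ne_zero.2 Fintype.card_ne_zero
  simp only [← smul_sub, real_inner_smul_right, ← mul_sum, sum_sum_inner_sub_alignment hA]
  field_simp

end Inner

end CuckerSmale

open CuckerSmale

theorem cuckerSmale_consensus_of_uniformly_bounded_general
    {d N : ℕ}
    (a : ℝ → ℝ)
    (ha_pos : ∀ r, 0 ≤ r → 0 < a r)
    (ha_mono : ∀ r s, 0 ≤ r → r ≤ s → a s ≤ a r)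
    (x v : ℝ → Fin N → EuclideanSpace ℝ (Fin d))
    (hx : ∀ (i : Fin N), ∀ t, 0 ≤ t → HasDerivAt (fun s => x s i) (v t i) t)
    (hv : ∀ (i : Fin N), ∀ t, 0 ≤ t → HasDerivAt (fun s => v s i)
      ((N : ℝ)⁻¹ • ∑ j, a ‖x t i - x t j‖ • (v t j - v t i)) t)
    (R : ℝ) (hR : 0 < R)
    (hmeas : volume {t : ℝ | 0 ≤ t ∧ ∀ i j, ‖x t i - x t j‖ ≤ R} = ⊤) :
    ∀ i, Tendsto (fun t => ‖v t i - (N : ℝ)⁻¹ • ∑ j, v t j‖) atTop (nhds 0) := by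
  intro i
  have : Nonempty (Fin N) := ⟨i⟩
  have hS : MeasurableSet {t : ℝ | 0 ≤ t ∧ ∀ i j, ‖x t i - x t j‖ ≤ R} :=
    (isClosed_setOf_forall_norm_sub_le isClosed_Ici
      (fun i t ht => (hx i t ht).continuousAt.continuousWithinAt) R).measurableSet
  have hderiv : ∀ t, 0 ≤ t → HasDerivAt (fun s => spread (v s))
      (-2 * dissipation (fun i j => a ‖x t i - x t j‖) (v t)) t := fun t ht =>
    hasDerivAt_spread_of_alignment (fun i j => by rw [norm_sub_rev])
      (by rw [Fintype.card_fin]; exact fun i => hv i t ht)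
  have hspread : Tendsto (fun t => spread (v t)) atTop (𝓝 0) := by
    refine tendsto_zero_of_hasDerivAt_le_neg_mul (mul_pos two_pos (ha_pos R hR.le)) hS
      (fun t ht => ht.1) hmeas (fun t _ => spread_nonneg _) hderiv (fun t _ => ?_) (fun t ht => ?_)
    · linarith [dissipation_nonneg (fun i j => (ha_pos _ (norm_nonneg (x t i - x t j))).le) (v t)]
    · linarith [mul_spread_le_dissipation
        (fun i j => ha_mono _ _ (norm_nonneg (x t i - x t j)) (ht.2 i j)) (v t)]
  refine squeeze_zero (fun t => norm_nonneg _) (fun t => ?_) (by simpa using hspread.sqrt)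
  simpa only [Fintype.card_fin] using norm_sub_mean_le_sqrt_spread (v t) i

/-- A solution of the Cucker-Smale system whose agents stay within
mutual distance `R` for an infinite amount of time converges to consensus. -/
theorem cuckerSmale_consensus_of_uniformly_bounded
    {d N : ℕ} (hN : 0 < N)
    (a : ℝ → ℝ)
    (ha_pos : ∀ r, 0 ≤ r → 0 < a r)
    (ha_mono : ∀ r s, 0 ≤ r → r ≤ s → a s ≤ a r)
    (x v : ℝ → Fin N → EuclideanSpace ℝ (Fin d))
    (hx : ∀ (i : Fin N), ∀ t, 0 ≤ t → HasDerivAt (fun s => x s i) (v t i) t)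
    (hv : ∀ (i : Fin N), ∀ t, 0 ≤ t → HasDerivAt (fun s => v s i)
      ((N : ℝ)⁻¹ • ∑ j, a ‖x t i - x t j‖ • (v t j - v t i)) t)
    (R : ℝ) (hR : 0 < R)
    (hmeas : volume {t : ℝ | 0 ≤ t ∧ ∀ i j, ‖x t i - x t j‖ ≤ R} = ⊤) :
    ∀ i, Tendsto (fun t => ‖v t i - (N : ℝ)⁻¹ • ∑ j, v t j‖) atTop (nhds 0) :=
  cuckerSmale_consensus_of_uniformly_bounded_general a ha_pos ha_mono x v hx hv R hR hmeas
end

section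
/- Let (x,v) : [0,∞) → (ℝ^d)^N × (ℝ^d)^N be a solution of the Cucker-Smale system ẋ_i = v_i, v̇_i = (1/N) Σ_{j=1}^N a(‖x_i − x_j‖)(v_j − v_i), with kernel a : [0,∞) → (0,∞) nonincreasing, bounded and Lipschitz continuous. Define X(t) = B(x(t),x(t)) and V(t) = B(v(t),v(t)). Then for every t ≥ 0 one has d/dt V(t) ≤ −2 a(√(2N X(t))) V(t); in particular V is nonincreasing. -/
open scoped BigOperators InnerProductSpace
open MeasureTheory Filter

/-- The symmetric bilinear form `B(v,w) = (1/(2N²)) ∑ᵢ∑ⱼ (vᵢ-vⱼ)·(wᵢ-wⱼ)`. -/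
noncomputable def bform {d N : ℕ} (v w : Fin N → EuclideanSpace ℝ (Fin d)) : ℝ :=
  (2 * (N : ℝ) ^ 2)⁻¹ * ∑ i, ∑ j, ⟪v i - v j, w i - w j⟫_ℝ

/-!
Differentiating, `V' = 2 B(v, F)` where `F` is the alignment force. The weights
`a(‖xᵢ - xⱼ‖)` are symmetric in `i, j`, so the forces sum to zero and symmetrising gives
`2 B(v, F) = -(1/N²) ∑ᵢⱼ a(‖xᵢ - xⱼ‖) ‖vᵢ - vⱼ‖²`. Centering the positions at their mean
shows that every distance `‖xᵢ - xⱼ‖` is at most `√(2N X)`, so monotonicity of `a` bounds each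
weight below by `a(√(2N X))`. Since `a > 0` and `V ≥ 0`, the derivative is nonpositive.
-/

open Finset

section PairwiseSums

variable {ι E : Type*} [Fintype ι] [NormedAddCommGroup E] [InnerProductSpace ℝ E]

lemma sum_sum_inner_sub_sub (u w : ι → E) :
    ∑ k, ∑ l, ⟪u k - u l, w k - w l⟫_ℝ =
      2 * Fintype.card ι * ∑ k, ⟪u k, w k⟫_ℝ - 2 * ⟪∑ k, u k, ∑ k, w k⟫_ℝ := by
  simp only [inner_sub_left, inner_sub_right, sum_sub_distrib, sum_const, card_univ,
    nsmul_eq_mul, ← inner_sum, ← sum_inner, ← mul_sum]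
  rw [real_inner_comm (∑ k, w k)]
  simp only [real_inner_comm (w _)]
  ring

lemma sum_sum_norm_sub_sq (u : ι → E) :
    ∑ k, ∑ l, ‖u k - u l‖ ^ 2 =
      2 * Fintype.card ι * ∑ k, ‖u k‖ ^ 2 - 2 * ‖∑ k, u k‖ ^ 2 := by
  simpa only [real_inner_self_eq_norm_sq] using sum_sum_inner_sub_sub u u

lemma card_mul_norm_sub_sq_le_sum_sum (u : ι → E) (i j : ι) :
    Fintype.card ι * ‖u i - u j‖ ^ 2 ≤ ∑ k, ∑ l, ‖u k - u l‖ ^ 2 := by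
  have hcard : (Fintype.card ι : ℝ) ≠ 0 := by
    have : Nonempty ι := ⟨i⟩
    positivity
  set y : ι → E := fun k => u k - (Fintype.card ι : ℝ)⁻¹ • ∑ l, u l
  have hdiff : ∀ k l, y k - y l = u k - u l := fun k l => sub_sub_sub_cancel_right _ _ _
  have hy : ∑ k, y k = 0 := by
    simp only [y, sum_sub_distrib, sum_const, card_univ, ← Nat.cast_smul_eq_nsmul ℝ,
      smul_smul, mul_inv_cancel₀ hcard, one_smul, sub_self]
  have hpair : ‖y i - y j‖ ^ 2 ≤ 2 * ∑ k, ‖y k‖ ^ 2 := by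
    rcases eq_or_ne i j with rfl | hij
    · rw [sub_self, norm_zero, sq, zero_mul]; positivity
    calc ‖y i - y j‖ ^ 2 ≤ (‖y i‖ + ‖y j‖) ^ 2 := by gcongr; exact norm_sub_le _ _
      _ ≤ 2 * (‖y i‖ ^ 2 + ‖y j‖ ^ 2) := add_sq_le
      _ ≤ 2 * ∑ k, ‖y k‖ ^ 2 := by
        classical
        gcongr
        rw [← sum_pair (f := fun k => ‖y k‖ ^ 2) hij]
        exact sum_le_sum_of_subset_of_nonneg (subset_univ _) fun k _ _ => by positivity
  simp only [← hdiff, sum_sum_norm_sub_sq y, hy, norm_zero]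
  nlinarith [hpair]

noncomputable def alignmentForce (b : ι → ι → ℝ) (u : ι → E) (i : ι) : E :=
  (Fintype.card ι : ℝ)⁻¹ • ∑ k, b i k • (u k - u i)

variable {b : ι → ι → ℝ}

lemma sum_sum_smul_sub_eq_zero (hb : ∀ i k, b i k = b k i) (u : ι → E) :
    ∑ i, ∑ k, b i k • (u k - u i) = 0 := by
  simp only [smul_sub, sum_sub_distrib]
  rw [sub_eq_zero, sum_comm]
  simp only [hb]

lemma two_mul_sum_sum_mul_inner_sub (hb : ∀ i k, b i k = b k i) (u : ι → E) :
    2 * ∑ i, ∑ k, b i k * ⟪u i, u k - u i⟫_ℝ = -∑ i, ∑ k, b i k * ‖u i - u k‖ ^ 2 := by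
  have hswap : ∑ i, ∑ k, b i k * ⟪u i, u k - u i⟫_ℝ =
      ∑ i, ∑ k, b i k * ⟪u k, u i - u k⟫_ℝ := by
    rw [sum_comm]; simp only [hb]
  rw [two_mul]
  nth_rw 2 [hswap]
  simp only [← sum_add_distrib, ← sum_neg_distrib, ← mul_add, ← mul_neg]
  refine sum_congr rfl fun i _ => sum_congr rfl fun k _ => ?_
  rw [← norm_neg, neg_sub, ← real_inner_self_eq_norm_sq]
  simp only [inner_sub_left, inner_sub_right, real_inner_comm (u i)]
  ring

lemma sum_sum_inner_sub_alignmentForce (hb : ∀ i k, b i k = b k i) (u : ι → E) :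
    ∑ i, ∑ j, ⟪u i - u j, alignmentForce b u i - alignmentForce b u j⟫_ℝ =
      -∑ i, ∑ j, b i j * ‖u i - u j‖ ^ 2 := by
  unfold alignmentForce
  rcases isEmpty_or_nonempty ι with hι | hι
  · simp
  have hcard : (Fintype.card ι : ℝ) ≠ 0 := by positivity
  rw [sum_sum_inner_sub_sub, ← smul_sum, sum_sum_smul_sub_eq_zero hb, smul_zero, inner_zero_right,
    mul_zero, sub_zero, ← two_mul_sum_sum_mul_inner_sub hb]
  simp only [real_inner_smul_right, inner_sum, real_inner_smul_right, ← mul_sum]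
  field_simp

end PairwiseSums

section BForm

variable {d N : ℕ}

lemma bform_self_eq (u : Fin N → EuclideanSpace ℝ (Fin d)) :
    bform u u = (2 * (N : ℝ) ^ 2)⁻¹ * ∑ i, ∑ j, ‖u i - u j‖ ^ 2 := by
  simp only [bform, real_inner_self_eq_norm_sq]

lemma bform_self_nonneg (u : Fin N → EuclideanSpace ℝ (Fin d)) : 0 ≤ bform u u := by
  rw [bform_self_eq]; positivity

lemma norm_sub_le_sqrt_bform (u : Fin N → EuclideanSpace ℝ (Fin d)) (i j : Fin N) :
    ‖u i - u j‖ ≤ Real.sqrt (2 * N * bform u u) := by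
  have hN : (0 : ℝ) < N := by exact_mod_cast i.pos
  apply Real.le_sqrt_of_sq_le
  have := card_mul_norm_sub_sq_le_sum_sum u i j
  rw [Fintype.card_fin] at this
  rw [bform_self_eq, ← mul_assoc,
    show 2 * (N : ℝ) * (2 * (N : ℝ) ^ 2)⁻¹ = (N : ℝ)⁻¹ by field_simp,
    le_inv_mul_iff₀ hN]
  exact this

lemma hasDerivAt_bform_self {u : ℝ → Fin N → EuclideanSpace ℝ (Fin d)}
    {u' : Fin N → EuclideanSpace ℝ (Fin d)} {t : ℝ}
    (hu : ∀ i, HasDerivAt (fun s => u s i) (u' i) t) :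
    HasDerivAt (fun s => bform (u s) (u s)) (2 * bform (u t) u') t := by
  have hdiff : ∀ i j, HasDerivAt (fun s => ⟪u s i - u s j, u s i - u s j⟫_ℝ)
      (2 * ⟪u t i - u t j, u' i - u' j⟫_ℝ) t := fun i j =>
    (((hu i).sub (hu j)).inner ℝ ((hu i).sub (hu j))).congr_deriv <| by
      simp only [Pi.sub_apply, real_inner_comm (u' i - u' j)]
      ring
  have hsum := (HasDerivAt.fun_sum (u := univ) fun i _ =>
    HasDerivAt.fun_sum (u := univ) fun j _ => hdiff i j).const_mul (2 * (N : ℝ) ^ 2)⁻¹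
  refine hsum.congr_deriv ?_
  simp only [bform, ← mul_sum]
  ring

lemma bform_alignmentForce {b : Fin N → Fin N → ℝ} (hb : ∀ i j, b i j = b j i)
    (v : Fin N → EuclideanSpace ℝ (Fin d)) :
    bform v (alignmentForce b v) =
      -((2 * (N : ℝ) ^ 2)⁻¹ * ∑ i, ∑ j, b i j * ‖v i - v j‖ ^ 2) := by
  rw [bform, sum_sum_inner_sub_alignmentForce hb, mul_neg]

lemma two_mul_bform_alignmentForce_le {a : ℝ → ℝ} (ha : ∀ r s, 0 ≤ r → r ≤ s → a s ≤ a r)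
    (x v : Fin N → EuclideanSpace ℝ (Fin d)) :
    2 * bform v (alignmentForce (fun i j => a ‖x i - x j‖) v) ≤
      -2 * a (Real.sqrt (2 * N * bform x x)) * bform v v := by
  have hsum : a (Real.sqrt (2 * N * bform x x)) * ∑ i, ∑ j, ‖v i - v j‖ ^ 2 ≤
      ∑ i, ∑ j, a ‖x i - x j‖ * ‖v i - v j‖ ^ 2 := by
    simp only [mul_sum]
    gcongr with i _ j _
    exact ha _ _ (norm_nonneg _) (norm_sub_le_sqrt_bform x i j)
  have hc : (0 : ℝ) ≤ (2 * (N : ℝ) ^ 2)⁻¹ := by positivity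
  rw [bform_alignmentForce (fun i j => by rw [norm_sub_rev]), bform_self_eq v]
  nlinarith [mul_le_mul_of_nonneg_left hsum hc]

end BForm

lemma antitoneOn_of_hasDerivAt_nonpos {D : Set ℝ} (hD : Convex ℝ D) {f f' : ℝ → ℝ}
    (hf : ∀ t ∈ D, HasDerivAt f (f' t) t) (hf' : ∀ t ∈ D, f' t ≤ 0) : AntitoneOn f D :=
  antitoneOn_of_hasDerivWithinAt_nonpos hD
    (fun t ht => (hf t ht).continuousAt.continuousWithinAt)
    (fun t ht => (hf t (interior_subset ht)).hasDerivWithinAt)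
    (fun t ht => hf' t (interior_subset ht))

theorem cuckerSmale_V_decay_general
    {d N : ℕ}
    (a : ℝ → ℝ)
    (ha_pos : ∀ r, 0 ≤ r → 0 < a r)
    (ha_mono : ∀ r s, 0 ≤ r → r ≤ s → a s ≤ a r)
    (x v : ℝ → Fin N → EuclideanSpace ℝ (Fin d))
    (hv : ∀ (i : Fin N), ∀ t, 0 ≤ t → HasDerivAt (fun s => v s i)
      ((N : ℝ)⁻¹ • ∑ j, a ‖x t i - x t j‖ • (v t j - v t i)) t) :
    (∀ t, 0 ≤ t → ∃ V' : ℝ, HasDerivAt (fun s => bform (v s) (v s)) V' t ∧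
      V' ≤ -2 * a (Real.sqrt (2 * N * bform (x t) (x t))) * bform (v t) (v t)) ∧
    AntitoneOn (fun t => bform (v t) (v t)) (Set.Ici 0) := by
  set F := fun t => alignmentForce (fun i j => a ‖x t i - x t j‖) (v t)
  have hV : ∀ t ∈ Set.Ici (0 : ℝ), HasDerivAt (fun s => bform (v s) (v s))
      (2 * bform (v t) (F t)) t := fun t ht =>
    hasDerivAt_bform_self fun i => by
      simpa only [F, alignmentForce, Fintype.card_fin] using hv i t ht
  have hV_le : ∀ t, 2 * bform (v t) (F t) ≤
      -2 * a (Real.sqrt (2 * N * bform (x t) (x t))) * bform (v t) (v t) := fun t =>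
    two_mul_bform_alignmentForce_le ha_mono (x t) (v t)
  refine ⟨fun t ht => ⟨_, hV t ht, hV_le t⟩, antitoneOn_of_hasDerivAt_nonpos (convex_Ici 0) hV
    fun t _ => (hV_le t).trans ?_⟩
  exact mul_nonpos_of_nonpos_of_nonneg
    (by linarith [ha_pos _ (Real.sqrt_nonneg (2 * N * bform (x t) (x t)))])
    (bform_self_nonneg (v t))

/-- Along any solution of the Cucker-Smale system, the functional
`V(t) = B(v(t),v(t))` satisfies `dV/dt ≤ -2 a(√(2N X(t))) V(t)`; in particular `V`
is nonincreasing on `[0,∞)`. -/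
theorem cuckerSmale_V_decay
    {d N : ℕ} (hN : 0 < N)
    (a : ℝ → ℝ)
    (ha_pos : ∀ r, 0 ≤ r → 0 < a r)
    (ha_mono : ∀ r s, 0 ≤ r → r ≤ s → a s ≤ a r)
    (ha_bdd : ∃ C, ∀ r, 0 ≤ r → a r ≤ C)
    (ha_lip : ∃ K : NNReal, LipschitzWith K a)
    (x v : ℝ → Fin N → EuclideanSpace ℝ (Fin d))
    (hx : ∀ (i : Fin N), ∀ t, 0 ≤ t → HasDerivAt (fun s => x s i) (v t i) t)
    (hv : ∀ (i : Fin N), ∀ t, 0 ≤ t → HasDerivAt (fun s => v s i)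
      ((N : ℝ)⁻¹ • ∑ j, a ‖x t i - x t j‖ • (v t j - v t i)) t) :
    (∀ t, 0 ≤ t → ∃ V' : ℝ, HasDerivAt (fun s => bform (v s) (v s)) V' t ∧
      V' ≤ -2 * a (Real.sqrt (2 * N * bform (x t) (x t))) * bform (v t) (v t)) ∧
    AntitoneOn (fun t => bform (v t) (v t)) (Set.Ici 0) :=
  cuckerSmale_V_decay_general a ha_pos ha_mono x v hv
end

section
/- Consider the planar ODE system ẋ(t) = v(t), v̇(t) = −v(t)/(1 + x(t)²) on [0,∞) with initial condition x(0) = x^0 > 0, v(0) = v^0 > 0 (arising as the relative state of two Cucker-Smale agents on the line with kernel a(r) = 1/(2(1+r²))). Every solution satisfies v(t) − v^0 = −arctan x(t) + arctan x^0 for all t ≥ 0. Consequently, if arctan x^0 + v^0 > π/2, then there exists ε > 0 with |v(t)| > ε for all t ≥ 0; in particular v(t) does not converge to 0, so the two-agent system does not converge to consensus. -/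
open Filter Real Topology

/-!
Along a solution, `v + arctan x` is conserved, since its derivative is
`-v/(1+x²) + v/(1+x²) = 0`. As `arctan < π/2`, this gives
`v(t) > arctan x⁰ + v⁰ - π/2`, a positive constant under the hypothesis.
-/

theorem constant_of_hasDerivAt_zero_Ici {E : Type*} [NormedAddCommGroup E] [NormedSpace ℝ E]
    {f : ℝ → E} {a : ℝ} (hf : ∀ t, a ≤ t → HasDerivAt f 0 t) {t : ℝ} (ht : a ≤ t) :
    f t = f a :=
  constant_of_has_deriv_right_zero
    (fun s hs => (hf s hs.1).continuousAt.continuousWithinAt)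
    (fun s hs => (hf s hs.1).hasDerivWithinAt) t ⟨ht, le_rfl⟩

theorem not_tendsto_nhds_zero_of_eventually_lt_norm {α E : Type*} [NormedAddCommGroup E]
    {l : Filter α} [l.NeBot] {f : α → E} {ε : ℝ} (hε : 0 < ε) (hf : ∀ᶠ a in l, ε < ‖f a‖) :
    ¬Tendsto f l (𝓝 0) := fun hlim => by
  obtain ⟨a, hsmall, hlarge⟩ := ((hlim.eventually (Metric.ball_mem_nhds 0 hε)).and hf).exists
  rw [dist_zero_right] at hsmall
  exact hlarge.not_gt hsmall

noncomputable def cuckerSmaleInvariant (x v : ℝ → ℝ) (t : ℝ) : ℝ := v t + arctan (x t)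

theorem hasDerivAt_cuckerSmaleInvariant {x v : ℝ → ℝ} {t : ℝ} (hx : HasDerivAt x (v t) t)
    (hv : HasDerivAt v (-(v t) / (1 + x t ^ 2)) t) :
    HasDerivAt (cuckerSmaleInvariant x v) 0 t := by
  have hsum := hv.add ((hasDerivAt_arctan (x t)).comp t hx)
  have hcancel : -(v t) / (1 + x t ^ 2) + 1 / (1 + x t ^ 2) * v t = 0 := by ring
  rwa [hcancel] at hsum

theorem cuckerSmaleInvariant_eq {x v : ℝ → ℝ}
    (hx : ∀ t, 0 ≤ t → HasDerivAt x (v t) t)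
    (hv : ∀ t, 0 ≤ t → HasDerivAt v (-(v t) / (1 + x t ^ 2)) t) {t : ℝ} (ht : 0 ≤ t) :
    cuckerSmaleInvariant x v t = cuckerSmaleInvariant x v 0 :=
  constant_of_hasDerivAt_zero_Ici
    (fun s hs => hasDerivAt_cuckerSmaleInvariant (hx s hs) (hv s hs)) ht

theorem cuckerSmale_two_agents_no_consensus_general
    (x v : ℝ → ℝ) (x0 v0 : ℝ)
    (hx0 : x 0 = x0) (hv0 : v 0 = v0)
    (hx : ∀ t, 0 ≤ t → HasDerivAt x (v t) t)
    (hv : ∀ t, 0 ≤ t → HasDerivAt v (-(v t) / (1 + (x t) ^ 2)) t) :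
    (∀ t, 0 ≤ t → v t - v0 = -Real.arctan (x t) + Real.arctan x0) ∧
    (Real.arctan x0 + v0 > Real.pi / 2 →
      (∃ ε > 0, ∀ t, 0 ≤ t → ε < |v t|) ∧
      ¬ Tendsto v atTop (nhds 0)) := by
  have conservation : ∀ t, 0 ≤ t → v t - v0 = -arctan (x t) + arctan x0 := fun t ht => by
    have h := cuckerSmaleInvariant_eq hx hv ht
    simp only [cuckerSmaleInvariant, hx0, hv0] at h
    linarith
  refine ⟨conservation, fun hlarge => ?_⟩
  have lower : ∀ t, 0 ≤ t → arctan x0 + v0 - π / 2 < |v t| := fun t ht => by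
    linarith [conservation t ht, arctan_lt_pi_div_two (x t), le_abs_self (v t)]
  refine ⟨⟨_, sub_pos.2 hlarge, lower⟩, ?_⟩
  exact not_tendsto_nhds_zero_of_eventually_lt_norm (sub_pos.2 hlarge)
    (eventually_atTop.2 ⟨(0 : ℝ), lower⟩)

/-- For the relative dynamics `ẋ = v`, `v̇ = -v/(1+x²)` of two
Cucker-Smale agents on the line with `x(0) = x⁰ > 0`, `v(0) = v⁰ > 0`, one has
`v(t) - v⁰ = -arctan x(t) + arctan x⁰` for all `t ≥ 0`; consequently, if
`arctan x⁰ + v⁰ > π/2`, then `|v(t)|` stays above a positive constant, so `v` does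
not tend to `0` (no consensus). -/
theorem cuckerSmale_two_agents_no_consensus
    (x v : ℝ → ℝ) (x0 v0 : ℝ) (hx0pos : 0 < x0) (hv0pos : 0 < v0)
    (hx0 : x 0 = x0) (hv0 : v 0 = v0)
    (hx : ∀ t, 0 ≤ t → HasDerivAt x (v t) t)
    (hv : ∀ t, 0 ≤ t → HasDerivAt v (-(v t) / (1 + (x t) ^ 2)) t) :
    (∀ t, 0 ≤ t → v t - v0 = -Real.arctan (x t) + Real.arctan x0) ∧
    (Real.arctan x0 + v0 > Real.pi / 2 →
      (∃ ε > 0, ∀ t, 0 ≤ t → ε < |v t|) ∧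
      ¬ Tendsto v atTop (nhds 0)) :=
  cuckerSmale_two_agents_no_consensus_general x v x0 v0 hx0 hv0 hx hv
end

section
/- Let (x,v) be a solution of the perturbed Cucker-Smale system ẋ_i = v_i, v̇_i = (1/N) Σ_{j=1}^N a(‖x_i − x_j‖)(v_j − v_i) + α(t)(v̄ − v_i) + β(t) Δ_i(t) with β(t) > 0 and min α(t) > 0. If there exists T ≥ 0 such that Δ_i^⊥(t) = Δ_i(t) − (1/N) Σ_{j=1}^N Δ_j(t) = 0 for every t ≥ T and every i = 1,...,N, then (x,v) tends to consensus. In particular, if all agents are subject to the same deviation, Δ_i(t) = Δ(t) for all i and all t, the system tends to consensus. -/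
open scoped BigOperators InnerProductSpace
open MeasureTheory Filter

/-- The mean of `N` vectors. -/
noncomputable def meanVec {d N : ℕ} (v : Fin N → EuclideanSpace ℝ (Fin d)) :
    EuclideanSpace ℝ (Fin d) :=
  (N : ℝ)⁻¹ • ∑ i, v i

/-!
The deviation energy `W = ∑ᵢ ‖vᵢ - v̄‖²` is a Lyapunov function. Along the flow its derivative
is `2 ∑ᵢ ⟪vᵢ - v̄, v̇ᵢ⟫`: the alignment term contributes a nonpositive amount because the kernel
weights `a(‖xᵢ - xⱼ‖)` are symmetric and nonnegative, the damping term contributes `-2α W`, and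
a perturbation that is the same for all agents contributes nothing since the deviations sum to
zero. Hence `W' ≤ -2 αmin W` after time `T`, and Grönwall's inequality gives exponential decay.
-/

open Real in
theorem tendsto_zero_of_hasDerivAt_le_neg_mul_s8 {f f' : ℝ → ℝ} {c T : ℝ} (hc : 0 < c)
    (hf_nonneg : ∀ t, T ≤ t → 0 ≤ f t) (hf : ∀ t, T ≤ t → HasDerivAt f (f' t) t)
    (hf' : ∀ t, T ≤ t → f' t ≤ -c * f t) :
    Tendsto f atTop (nhds 0) := by
  have bound : ∀ t, T ≤ t → f t ≤ f T * exp (-c * (t - T)) := by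
    intro t ht
    have h := le_gronwallBound_of_liminf_deriv_right_le (f' := f') (K := -c) (ε := 0) (b := t)
      (fun s hs => (hf s hs.1).continuousAt.continuousWithinAt)
      (fun s hs _ => (hf s hs.1).hasDerivWithinAt.liminf_right_slope_le) le_rfl
      (fun s hs => (add_zero (-c * f s)).symm ▸ hf' s hs.1) t ⟨ht, le_rfl⟩
    rwa [gronwallBound_ε0] at h
  have hexp : Tendsto (fun t => f T * exp (-c * (t - T))) atTop (nhds 0) := by
    have h : Tendsto (fun t => -c * (t - T)) atTop atBot :=
      (tendsto_atTop_add_const_right _ _ tendsto_id).const_mul_atTop_of_neg (neg_neg_of_pos hc)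
    simpa using (tendsto_exp_comp_nhds_zero.mpr h).const_mul (f T)
  exact tendsto_of_tendsto_of_tendsto_of_le_of_le' tendsto_const_nhds hexp
    ((eventually_ge_atTop T).mono hf_nonneg) ((eventually_ge_atTop T).mono bound)

theorem sum_sum_mul_inner_sub_nonpos {ι E : Type*} [Fintype ι] [NormedAddCommGroup E]
    [InnerProductSpace ℝ E] (A : ι → ι → ℝ) (hA_symm : ∀ i j, A i j = A j i)
    (hA_nonneg : ∀ i j, 0 ≤ A i j) (w : ι → E) :
    ∑ i, ∑ j, A i j * ⟪w i, w j - w i⟫_ℝ ≤ 0 := by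
  have hswap : ∑ i, ∑ j, A i j * ⟪w i, w j - w i⟫_ℝ = ∑ i, ∑ j, A i j * ⟪w j, w i - w j⟫_ℝ := by
    rw [Finset.sum_comm]
    exact Finset.sum_congr rfl fun i _ => Finset.sum_congr rfl fun j _ => by rw [hA_symm]
  have hdouble : ∑ i, ∑ j, A i j * ⟪w i, w j - w i⟫_ℝ + ∑ i, ∑ j, A i j * ⟪w j, w i - w j⟫_ℝ =
      ∑ i, ∑ j, A i j * -‖w j - w i‖ ^ 2 := by
    simp only [← Finset.sum_add_distrib, ← mul_add]
    congr! 3 with i _ j _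
    rw [← real_inner_self_eq_norm_sq]
    simp only [inner_sub_left, inner_sub_right, real_inner_comm (w i) (w j)]
    ring
  have hneg : ∑ i, ∑ j, A i j * -‖w j - w i‖ ^ 2 ≤ 0 :=
    Finset.sum_nonpos fun i _ => Finset.sum_nonpos fun j _ =>
      mul_nonpos_of_nonneg_of_nonpos (hA_nonneg i j) (neg_nonpos.mpr (sq_nonneg _))
  linarith

section meanVec

variable {d N : ℕ}

theorem sum_sub_meanVec (v : Fin N → EuclideanSpace ℝ (Fin d)) :
    ∑ i, (v i - meanVec v) = 0 := by
  rcases Nat.eq_zero_or_pos N with rfl | hN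
  · simp
  rw [Finset.sum_sub_distrib, Finset.sum_const, Finset.card_univ, Fintype.card_fin, meanVec,
    ← Nat.cast_smul_eq_nsmul ℝ, smul_smul, mul_inv_cancel₀ (by positivity), one_smul, sub_self]

theorem sum_inner_sub_meanVec (v : Fin N → EuclideanSpace ℝ (Fin d))
    (u : EuclideanSpace ℝ (Fin d)) : ∑ i, ⟪v i - meanVec v, u⟫_ℝ = 0 := by
  rw [← sum_inner, sum_sub_meanVec, inner_zero_left]

theorem hasDerivAt_meanVec {v : ℝ → Fin N → EuclideanSpace ℝ (Fin d)}
    {v' : Fin N → EuclideanSpace ℝ (Fin d)} {t : ℝ}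
    (hv : ∀ i, HasDerivAt (fun s => v s i) (v' i) t) :
    HasDerivAt (fun s => meanVec (v s)) (meanVec v') t :=
  (HasDerivAt.fun_sum fun i _ => hv i).const_smul ((N : ℝ)⁻¹)

theorem hasDerivAt_sum_norm_sub_meanVec_sq {v : ℝ → Fin N → EuclideanSpace ℝ (Fin d)}
    {v' : Fin N → EuclideanSpace ℝ (Fin d)} {t : ℝ}
    (hv : ∀ i, HasDerivAt (fun s => v s i) (v' i) t) :
    HasDerivAt (fun s => ∑ i, ‖v s i - meanVec (v s)‖ ^ 2)
      (2 * ∑ i, ⟪v t i - meanVec (v t), v' i⟫_ℝ) t := by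
  refine (HasDerivAt.fun_sum (u := Finset.univ) fun i _ =>
    ((hv i).fun_sub (hasDerivAt_meanVec hv)).norm_sq).congr_deriv ?_
  simp only [inner_sub_right, mul_sub, Finset.sum_sub_distrib, ← Finset.mul_sum,
    sum_inner_sub_meanVec, mul_zero, sub_zero]

theorem sum_inner_sub_meanVec_cuckerSmale_le (a : ℝ → ℝ) (ha : ∀ r, 0 ≤ r → 0 ≤ a r)
    (x v : Fin N → EuclideanSpace ℝ (Fin d)) (α β : ℝ) (u : EuclideanSpace ℝ (Fin d)) :
    ∑ i, ⟪v i - meanVec v, (N : ℝ)⁻¹ • ∑ j, a ‖x i - x j‖ • (v j - v i)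
        + α • (meanVec v - v i) + β • u⟫_ℝ ≤ -α * ∑ i, ‖v i - meanVec v‖ ^ 2 := by
  set w := fun i => v i - meanVec v
  have halign : ∑ i, ⟪w i, (N : ℝ)⁻¹ • ∑ j, a ‖x i - x j‖ • (v j - v i)⟫_ℝ ≤ 0 := by
    have hvw : ∀ i j, v j - v i = w j - w i := fun i j => (sub_sub_sub_cancel_right _ _ _).symm
    simp only [real_inner_smul_right, inner_sum, hvw, ← Finset.mul_sum]
    exact mul_nonpos_of_nonneg_of_nonpos (by positivity)
      (sum_sum_mul_inner_sub_nonpos _ (fun i j => by rw [norm_sub_rev])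
        (fun i j => ha _ (norm_nonneg _)) w)
  have hdamp : ∑ i, ⟪w i, α • (meanVec v - v i)⟫_ℝ = -α * ∑ i, ‖w i‖ ^ 2 := by
    simp only [Finset.mul_sum, real_inner_smul_right, ← neg_sub (v _), inner_neg_right,
      real_inner_self_eq_norm_sq, w]
    ring_nf
  have hpert : ∑ i, ⟪w i, β • u⟫_ℝ = 0 := sum_inner_sub_meanVec v _
  simp only [inner_add_right, Finset.sum_add_distrib]
  rw [hdamp, hpert]
  linarith

end meanVec

theorem perturbedCuckerSmale_consensus_of_no_perp_perturbation_general
    {d N : ℕ}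
    (a : ℝ → ℝ)
    (ha_pos : ∀ r, 0 ≤ r → 0 < a r)
    (α β : ℝ → ℝ)
    (αmin : ℝ) (hαmin_pos : 0 < αmin) (hαmin : ∀ t, 0 ≤ t → αmin ≤ α t)
    (Δ : Fin N → ℝ → EuclideanSpace ℝ (Fin d))
    (x v : ℝ → Fin N → EuclideanSpace ℝ (Fin d))
    (hv : ∀ (i : Fin N), ∀ t, 0 ≤ t → HasDerivAt (fun s => v s i)
      ((N : ℝ)⁻¹ • ∑ j, a ‖x t i - x t j‖ • (v t j - v t i)
        + α t • (meanVec (v t) - v t i) + β t • Δ i t) t)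
    -- either the orthogonal components of the deviations vanish after some time `T`,
    -- or (in particular) all agents are subject to the same deviation
    (hΔ : (∃ T, 0 ≤ T ∧ ∀ t, T ≤ t → ∀ i, Δ i t - meanVec (fun j => Δ j t) = 0) ∨
      (∃ D : ℝ → EuclideanSpace ℝ (Fin d), ∀ (i : Fin N), ∀ t, 0 ≤ t → Δ i t = D t)) :
    ∀ i, Tendsto (fun t => ‖v t i - meanVec (v t)‖) atTop (nhds 0) := by
  obtain ⟨T, hT, hΔT⟩ : ∃ T, 0 ≤ T ∧ ∀ t, T ≤ t → ∃ u, ∀ i, Δ i t = u := by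
    rcases hΔ with ⟨T, hT, h⟩ | ⟨D, h⟩
    · exact ⟨T, hT, fun t ht => ⟨_, fun i => sub_eq_zero.mp (h t ht i)⟩⟩
    · exact ⟨0, le_rfl, fun t ht => ⟨D t, fun i => h i t ht⟩⟩
  set W := fun t => ∑ i, ‖v t i - meanVec (v t)‖ ^ 2
  have hW_nonneg : ∀ t, 0 ≤ W t := fun t => Finset.sum_nonneg fun i _ => sq_nonneg _
  have hW : Tendsto W atTop (nhds 0) := by
    refine tendsto_zero_of_hasDerivAt_le_neg_mul_s8 (mul_pos two_pos hαmin_pos)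
      (fun t _ => hW_nonneg t)
      (fun t ht => hasDerivAt_sum_norm_sub_meanVec_sq fun i => hv i t (hT.trans ht)) ?_
    intro t ht
    obtain ⟨u, hu⟩ := hΔT t ht
    simp only [hu]
    have hdiss := sum_inner_sub_meanVec_cuckerSmale_le a (fun r hr => (ha_pos r hr).le) (x t) (v t)
      (α t) (β t) u
    nlinarith [hαmin t (hT.trans ht), hW_nonneg t]
  intro i
  refine tendsto_of_tendsto_of_tendsto_of_le_of_le tendsto_const_nhds
    (by simpa using hW.sqrt) (fun t => norm_nonneg _) fun t => ?_
  exact (Real.le_sqrt (norm_nonneg _) (hW_nonneg t)).mpr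
    (Finset.single_le_sum (f := fun j => ‖v t j - meanVec (v t)‖ ^ 2)
      (fun j _ => sq_nonneg _) (Finset.mem_univ i))

/-- If after some time `T ≥ 0` the perturbations have no
orthogonal component (`Δᵢ^⊥ ≡ 0`), then the perturbed Cucker-Smale system tends
to consensus.  In particular this holds when all agents are subject to the same
deviation `Δᵢ(t) = Δ(t)`. -/
theorem perturbedCuckerSmale_consensus_of_no_perp_perturbation
    {d N : ℕ} (hN : 0 < N)
    (a : ℝ → ℝ)
    (ha_pos : ∀ r, 0 ≤ r → 0 < a r)
    (ha_mono : ∀ r s, 0 ≤ r → r ≤ s → a s ≤ a r)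
    (ha_bdd : ∃ C, ∀ r, 0 ≤ r → a r ≤ C)
    (ha_lip : ∃ K : NNReal, LipschitzWith K a)
    (α β : ℝ → ℝ)
    (hβ : ∀ t, 0 ≤ t → 0 < β t)
    (αmin : ℝ) (hαmin_pos : 0 < αmin) (hαmin : ∀ t, 0 ≤ t → αmin ≤ α t)
    (hα : ∀ t, 0 ≤ t → 0 ≤ α t)
    (Δ : Fin N → ℝ → EuclideanSpace ℝ (Fin d))
    (x v : ℝ → Fin N → EuclideanSpace ℝ (Fin d))
    (hx : ∀ (i : Fin N), ∀ t, 0 ≤ t → HasDerivAt (fun s => x s i) (v t i) t)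
    (hv : ∀ (i : Fin N), ∀ t, 0 ≤ t → HasDerivAt (fun s => v s i)
      ((N : ℝ)⁻¹ • ∑ j, a ‖x t i - x t j‖ • (v t j - v t i)
        + α t • (meanVec (v t) - v t i) + β t • Δ i t) t)
    -- either the orthogonal components of the deviations vanish after some time `T`,
    -- or (in particular) all agents are subject to the same deviation
    (hΔ : (∃ T, 0 ≤ T ∧ ∀ t, T ≤ t → ∀ i, Δ i t - meanVec (fun j => Δ j t) = 0) ∨
      (∃ D : ℝ → EuclideanSpace ℝ (Fin d), ∀ (i : Fin N), ∀ t, 0 ≤ t → Δ i t = D t)) :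
    ∀ i, Tendsto (fun t => ‖v t i - meanVec (v t)‖) atTop (nhds 0) :=
  perturbedCuckerSmale_consensus_of_no_perp_perturbation_general a ha_pos α β αmin hαmin_pos hαmin Δ
    x v hv hΔ
end
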